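/- Let R be a unital alternative ring with nontrivial idempotent e₁ and e₂ = 1 − e₁, k-torsion free for every k ∈ {2, 3, n−1, n−3} with k ≥ 1, satisfying conditions (1), (2), (3) and (4), and let D : R → R be a multiplicative Lie n-derivation (n ≥ 2) satisfying conditions (a), (b), (c) and with D(e₁) ∈ Z(R). Then for i ≠ j in {1,2} and all a, b ∈ R_ij, one has D(a*b) = D(a)*b + a*D(b). -/

import Mathlib

/-- The commutative center of a (possibly non-associative, non-unital) ring. -/
def rctr (R : Type*) [NonUnitalNonAssocRing R] : Set R := {z | ∀ x, z * x = x * z}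

/-- `R` is an alternative ring. -/
def IsAlt (R : Type*) [NonUnitalNonAssocRing R] : Prop :=
  ∀ x y : R, (x * x) * y = x * (x * y) ∧ (y * x) * x = y * (x * x)

/-- Peirce components relative to an idempotent `e`. -/
def P11 {R : Type*} [NonUnitalNonAssocRing R] (e : R) : Set R := {x | e * x = x ∧ x * e = x}
def P12 {R : Type*} [NonUnitalNonAssocRing R] (e : R) : Set R := {x | e * x = x ∧ x * e = 0}
def P21 {R : Type*} [NonUnitalNonAssocRing R] (e : R) : Set R := {x | e * x = 0 ∧ x * e = x}
def P22 {R : Type*} [NonUnitalNonAssocRing R] (e : R) : Set R := {x | e * x = 0 ∧ x * e = 0}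

/-- The iterated commutator `p_n`: `p_1(x) = x`,
`p_n(x_1,…,x_n) = [p_{n-1}(x_1,…,x_{n-1}), x_n]`. -/
def pn {R : Type*} [NonUnitalNonAssocRing R] : (n : ℕ) → (Fin n → R) → R
  | 0, _ => 0
  | 1, x => x 0
  | (m+2), x =>
      pn (m+1) (fun i => x i.castSucc) * x (Fin.last (m+1))
        - x (Fin.last (m+1)) * pn (m+1) (fun i => x i.castSucc)

/-- A (not necessarily additive) map `D` is a multiplicative Lie `n`-derivation. -/
def IsMultLieNDeriv {R : Type*} [NonUnitalNonAssocRing R] (n : ℕ) (D : R → R) : Prop :=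
  ∀ x : Fin n → R, D (pn n x) = ∑ i : Fin n, pn n (Function.update x i (D (x i)))

/-!
Pad the Lie `n`-rule with copies of `e₁`: on the tuple `(p, q, e₁, …, e₁)` every term
containing `D e₁` vanishes because `D e₁` is central, so with `ad = bracketRight e₁`,
`D (adⁿ⁻² [p, q]) = adⁿ⁻² [D p, q] + adⁿ⁻² [p, D q]`.
In an alternative ring `R₁₂ R₁₂ ⊆ R₂₁` and `R₂₁ R₂₁ ⊆ R₁₂`, both spaces square to zero
(hence are anticommutative), and `ad` acts on the product space `Y` by a sign, which `D`
respects on `Y`. This gives `D (2 • p q) = 2 • (D p * q + p * D q)` for `p, q` in the Peirce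
space `X`, and, taking `q = 2 • e₁`, `D (2 • v) = 2 • D v + ψ v` on `Y` with `ψ` additive.
Comparing the first identity for `(x + y, y)` and `(x, y)` gives
`D (x + y) * y = D x * y + D y * y`, hence `D (2 • a) * b = 2 • (D a * b)`; computing
`D (4 • a b)` through `(2 • a) * b` then forces `2 • ψ (a b) = 0`, and `2`-torsion freeness
turns the first identity into the Leibniz rule.
-/

section

variable {R : Type*} [NonUnitalNonAssocRing R]

section Alternative

theorem IsAlt.linearize_left (hR : IsAlt R) (x z y : R) :
    (x * z + z * x) * y = x * (z * y) + z * (x * y) := by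
  have h := (hR (x + z) y).1
  simp only [add_mul, mul_add, (hR x y).1, (hR z y).1] at h
  rw [add_mul]
  linear_combination (norm := abel) h

theorem IsAlt.linearize_right (hR : IsAlt R) (x z y : R) :
    y * (x * z + z * x) = (y * x) * z + (y * z) * x := by
  have h := (hR (x + z) y).2
  simp only [add_mul, mul_add, (hR x y).2, (hR z y).2] at h
  rw [mul_add]
  linear_combination (norm := abel) -h

variable {e x y : R}

theorem IsAlt.mul_mem_P21 (hR : IsAlt R) (hx : x ∈ P12 e) (hy : y ∈ P12 e) :
    x * y ∈ P21 e := by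
  have hl := hR.linearize_left x e y
  have hr := hR.linearize_right y e x
  rw [hx.1, hx.2, hy.1, zero_add] at hl
  rw [hx.2, hy.1, hy.2, zero_add, zero_mul, add_zero] at hr
  exact ⟨left_eq_add.mp hl, hr.symm⟩

theorem IsAlt.mul_mem_P12 (hR : IsAlt R) (hx : x ∈ P21 e) (hy : y ∈ P21 e) :
    x * y ∈ P12 e := by
  have hl := hR.linearize_left x e y
  have hr := hR.linearize_right y e x
  rw [hx.1, hx.2, hy.1, add_zero, mul_zero, zero_add] at hl
  rw [hx.2, hy.1, hy.2, add_zero] at hr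
  exact ⟨hl.symm, add_eq_right.mp hr.symm⟩

theorem IsAlt.mul_self_eq_zero_of_mem_P12 (hR : IsAlt R) (hx : x ∈ P12 e) : x * x = 0 := by
  have h := (hR x e).2
  rwa [hx.1, (hR.mul_mem_P21 hx hx).1] at h

theorem IsAlt.mul_self_eq_zero_of_mem_P21 (hR : IsAlt R) (hx : x ∈ P21 e) : x * x = 0 := by
  have h := (hR x e).1
  rw [hx.2, (hR.mul_mem_P12 hx hx).2] at h
  exact h.symm

end Alternative

def peirce12 (e : R) : AddSubgroup R where
  carrier := P12 e
  add_mem' hx hy := ⟨by rw [mul_add, hx.1, hy.1], by rw [add_mul, hx.2, hy.2, add_zero]⟩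
  zero_mem' := ⟨mul_zero e, zero_mul e⟩
  neg_mem' hx := ⟨by rw [mul_neg, hx.1], by rw [neg_mul, hx.2, neg_zero]⟩

def peirce21 (e : R) : AddSubgroup R where
  carrier := P21 e
  add_mem' hx hy := ⟨by rw [mul_add, hx.1, hy.1, add_zero], by rw [add_mul, hx.2, hy.2]⟩
  zero_mem' := ⟨mul_zero e, zero_mul e⟩
  neg_mem' hx := ⟨by rw [mul_neg, hx.1, neg_zero], by rw [neg_mul, hx.2]⟩

def bracketRight (e : R) : AddMonoid.End R := AddMonoidHom.mulRight e - AddMonoidHom.mulLeft e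

theorem bracketRight_apply (e v : R) : bracketRight e v = v * e - e * v := rfl

theorem bracketRight_of_mem_P12 {e v : R} (hv : v ∈ P12 e) : bracketRight e v = -v := by
  rw [bracketRight_apply, hv.1, hv.2, zero_sub]

theorem bracketRight_of_mem_P21 {e v : R} (hv : v ∈ P21 e) : bracketRight e v = v := by
  rw [bracketRight_apply, hv.1, hv.2, sub_zero]

section IteratedCommutator

theorem pn_succ_succ (m : ℕ) (x : Fin (m + 2) → R) :
    pn (m + 2) x = pn (m + 1) (fun i => x i.castSucc) * x (Fin.last (m + 1))
      - x (Fin.last (m + 1)) * pn (m + 1) (fun i => x i.castSucc) := rfl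

theorem pn_eq_of_padded {e p q : R} : ∀ {m : ℕ} {x : Fin (m + 2) → R}, x 0 = p → x 1 = q →
    (∀ i : Fin (m + 2), 2 ≤ (i : ℕ) → x i = e) → pn (m + 2) x = (bracketRight e ^ m) (p * q - q * p)
  | 0, x, h0, h1, _ => by
      rw [pn_succ_succ, pow_zero]
      exact congrArg₂ (fun a b => a * b - b * a) h0 h1
  | m + 1, x, h0, h1, hpad => by
      rw [pn_succ_succ, pn_eq_of_padded (x := fun i => x i.castSucc) h0 h1
        (fun i hi => hpad i.castSucc hi), hpad _ (by simp), pow_succ']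
      rfl

theorem pn_eq_zero_of_mem_rctr : ∀ {k : ℕ} (x : Fin k → R) (j : Fin k), 1 ≤ (j : ℕ) →
    x j ∈ rctr R → pn k x = 0
  | 0, _, j, _, _ => j.elim0
  | 1, _, j, hj, _ => by omega
  | k + 2, x, j, hj, hc => by
      rw [pn_succ_succ]
      by_cases hjk : (j : ℕ) = k + 1
      · rw [show Fin.last (k + 1) = j from Fin.ext hjk.symm, hc, sub_self]
      · have hlt : (j : ℕ) < k + 1 := by omega
        rw [pn_eq_zero_of_mem_rctr _ ⟨j, hlt⟩ hj hc, zero_mul, mul_zero, sub_zero]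

end IteratedCommutator

namespace IsMultLieNDeriv

variable {m : ℕ} {D : R → R} {e : R}

theorem map_bracketRight_pow (hD : IsMultLieNDeriv (m + 2) D) (hDe : D e ∈ rctr R) (p q : R) :
    D ((bracketRight e ^ m) (p * q - q * p)) =
      (bracketRight e ^ m) (D p * q - q * D p) + (bracketRight e ^ m) (p * D q - D q * p) := by
  let x : Fin (m + 2) → R := fun i => if (i : ℕ) = 0 then p else if (i : ℕ) = 1 then q else e
  have hpad : ∀ i : Fin (m + 2), 2 ≤ (i : ℕ) → x i = e := fun i hi => by
    simp only [x]; rw [if_neg (by omega), if_neg (by omega)]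
  have hx : pn (m + 2) x = (bracketRight e ^ m) (p * q - q * p) :=
    pn_eq_of_padded (by simp [x]) (by simp [x]) hpad
  have hx0 : pn (m + 2) (Function.update x 0 (D (x 0))) =
      (bracketRight e ^ m) (D p * q - q * D p) :=
    pn_eq_of_padded (by simp [x]) (by simp [x]) fun i hi => by
      rw [Function.update_of_ne (by rintro rfl; simp at hi), hpad i hi]
  have hx1 : pn (m + 2) (Function.update x (Fin.succ 0) (D (x (Fin.succ 0)))) =
      (bracketRight e ^ m) (p * D q - D q * p) :=
    pn_eq_of_padded (by simp [x]) (by simp [x]) fun i hi => by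
      rw [Function.update_of_ne (by rintro rfl; simp at hi), hpad i hi]
  have hxe : ∀ i : Fin m, pn (m + 2) (Function.update x i.succ.succ (D (x i.succ.succ))) = 0 :=
    fun i => pn_eq_zero_of_mem_rctr _ i.succ.succ (by simp) (by simpa [hpad] using hDe)
  have h := hD x
  rwa [Fin.sum_univ_succ, Fin.sum_univ_succ, Finset.sum_eq_zero fun i _ => hxe i, add_zero,
    hx, hx0, hx1] at h

theorem map_bracketRight_pow_succ (hD : IsMultLieNDeriv (m + 2) D) (hDe : D e ∈ rctr R)
    (v : R) : D ((bracketRight e ^ (m + 1)) v) = (bracketRight e ^ (m + 1)) (D v) := by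
  have h := hD.map_bracketRight_pow hDe v e
  rwa [← hDe v, sub_self, map_zero, add_zero] at h

theorem map_neg_bracketRight_pow_succ (hD : IsMultLieNDeriv (m + 2) D) (hDe : D e ∈ rctr R)
    (v : R) : D (-(bracketRight e ^ (m + 1)) v) = -(bracketRight e ^ (m + 1)) (D v) := by
  have h := hD.map_bracketRight_pow hDe e v
  rwa [hDe v, sub_self, map_zero, zero_add, ← neg_sub, map_neg, ← neg_sub (D v * e), map_neg] at h

end IsMultLieNDeriv

section Eigenspace

variable {m : ℕ} {D : R → R} {e : R} {s : ℤ} {Y : AddSubgroup R}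

theorem bracketRight_pow_apply_of_mem (hY : ∀ v ∈ Y, bracketRight e v = s • v) (k : ℕ) {v : R}
    (hv : v ∈ Y) : (bracketRight e ^ k) v = s ^ k • v := by
  induction k with
  | zero => simp
  | succ k ih =>
    rw [AddMonoid.End.coe_pow, Function.iterate_succ_apply', ← AddMonoid.End.coe_pow, ih,
      map_zsmul, hY v hv, smul_smul, pow_succ]

namespace IsMultLieNDeriv

theorem map_neg_of_mem (hD : IsMultLieNDeriv (m + 2) D) (hDe : D e ∈ rctr R) (hs : IsUnit s)
    (hY : ∀ v ∈ Y, bracketRight e v = s • v) (hDY : ∀ v ∈ Y, D v ∈ Y) {v : R} (hv : v ∈ Y) :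
    D (-v) = -D v := by
  have hpos := hD.map_bracketRight_pow_succ hDe v
  have hneg := hD.map_neg_bracketRight_pow_succ hDe v
  rw [bracketRight_pow_apply_of_mem hY _ hv, bracketRight_pow_apply_of_mem hY _ (hDY v hv)]
    at hpos hneg
  -- whichever sign `s ^ (m + 1)` is, one of the two identities reads `D (-v) = -D v`
  rcases Int.isUnit_iff.mp (hs.pow (m + 1)) with h | h <;>
    simp only [h, one_smul, neg_one_zsmul, neg_neg] at hpos hneg
  · exact hneg
  · exact hpos

theorem map_zsmul_of_mem (hD : IsMultLieNDeriv (m + 2) D) (hDe : D e ∈ rctr R) (hs : IsUnit s)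
    (hY : ∀ v ∈ Y, bracketRight e v = s • v) (hDY : ∀ v ∈ Y, D v ∈ Y) {ε : ℤ} (hε : IsUnit ε)
    {v : R} (hv : v ∈ Y) : D (ε • v) = ε • D v := by
  rcases Int.isUnit_iff.mp hε with rfl | rfl
  · simp only [one_smul]
  · simp only [neg_one_zsmul, hD.map_neg_of_mem hDe hs hY hDY hv]

theorem map_commutator_of_mem (hD : IsMultLieNDeriv (m + 2) D) (hDe : D e ∈ rctr R)
    (hs : IsUnit s) (hY : ∀ v ∈ Y, bracketRight e v = s • v) (hDY : ∀ v ∈ Y, D v ∈ Y)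
    {p q : R} (hpq : p * q - q * p ∈ Y) (hDpq : D p * q - q * D p ∈ Y)
    (hpDq : p * D q - D q * p ∈ Y) :
    D (p * q - q * p) = (D p * q - q * D p) + (p * D q - D q * p) := by
  have h := hD.map_bracketRight_pow hDe p q
  rw [bracketRight_pow_apply_of_mem hY _ hpq, bracketRight_pow_apply_of_mem hY _ hDpq,
    bracketRight_pow_apply_of_mem hY _ hpDq, ← smul_add,
    hD.map_zsmul_of_mem hDe hs hY hDY (hs.pow m) hpq] at h
  exact (hs.pow m).isSMulRegular R h

theorem exists_addMonoidHom_map_two_nsmul (hD : IsMultLieNDeriv (m + 2) D) (hDe : D e ∈ rctr R)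
    (hs : IsUnit s) (hY : ∀ v ∈ Y, bracketRight e v = s • v) (hDY : ∀ v ∈ Y, D v ∈ Y) :
    ∃ ψ : R →+ R, ∀ v ∈ Y, D (2 • v) = 2 • D v + ψ v := by
  set ε := s ^ (m + 1)
  have hε : IsUnit ε := hs.pow (m + 1)
  refine ⟨ε • (bracketRight e ^ m * bracketRight (D (2 • e))), fun v hv => ?_⟩
  have h2e : ∀ w : R, w * (2 • e) - (2 • e) * w = 2 • bracketRight e w := fun w => by
    rw [mul_smul_comm, smul_mul_assoc, ← smul_sub, bracketRight_apply]
  have h := hD.map_bracketRight_pow hDe v (2 • e)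
  have hv' : (bracketRight e ^ m) (bracketRight e v) = ε • v :=
    bracketRight_pow_apply_of_mem hY (m + 1) hv
  have hDv' : (bracketRight e ^ m) (bracketRight e (D v)) = ε • D v :=
    bracketRight_pow_apply_of_mem hY (m + 1) (hDY v hv)
  rw [h2e, h2e, map_nsmul, map_nsmul, hv', hDv', smul_comm,
    hD.map_zsmul_of_mem hDe hs hY hDY hε (Y.nsmul_mem hv 2)] at h
  calc D (2 • v) = ε • ε • D (2 • v) := by rw [smul_smul, Int.isUnit_mul_self hε, one_smul]
    _ = 2 • D v + (ε • (bracketRight e ^ m * bracketRight (D (2 • e)))) v := by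
      rw [h, smul_add, smul_comm 2 ε, smul_smul, Int.isUnit_mul_self hε, one_smul]
      rfl

end IsMultLieNDeriv

end Eigenspace

def IsLieDerivOn (D : R → R) (X : Set R) : Prop :=
  ∀ p ∈ X, ∀ q ∈ X, D (p * q - q * p) = (D p * q - q * D p) + (p * D q - D q * p)

section SquareZero

variable {X Y : AddSubgroup R} {D : R → R} {x y : R}

theorem mul_comm_eq_neg_of_mem (hsq : ∀ x ∈ X, x * x = 0) (hx : x ∈ X) (hy : y ∈ X) :
    y * x = -(x * y) := by
  have h := hsq _ (X.add_mem hx hy)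
  rw [add_mul, mul_add, mul_add, hsq x hx, hsq y hy, zero_add, add_zero] at h
  exact eq_neg_of_add_eq_zero_right h

theorem map_two_nsmul_mul (hsq : ∀ x ∈ X, x * x = 0) (hDX : ∀ x ∈ X, D x ∈ X)
    (hlie : IsLieDerivOn D X)
    (hx : x ∈ X) (hy : y ∈ X) : D (2 • (x * y)) = 2 • (D x * y + x * D y) := by
  have h := hlie x hx y hy
  rw [mul_comm_eq_neg_of_mem hsq hx hy, mul_comm_eq_neg_of_mem hsq (hDX x hx) hy,
    mul_comm_eq_neg_of_mem hsq hx (hDX y hy), sub_neg_eq_add, sub_neg_eq_add, sub_neg_eq_add] at h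
  rw [two_nsmul (x * y), h, smul_add, two_nsmul, two_nsmul]

theorem map_add_mul_right (h2 : IsSMulRegular R (2 : ℕ)) (hsq : ∀ x ∈ X, x * x = 0)
    (hDX : ∀ x ∈ X, D x ∈ X)
    (hlie : IsLieDerivOn D X)
    (hx : x ∈ X) (hy : y ∈ X) : D (x + y) * y = D x * y + D y * y := by
  have hsum := map_two_nsmul_mul hsq hDX hlie (X.add_mem hx hy) hy
  rw [add_mul, hsq y hy, add_zero, map_two_nsmul_mul hsq hDX hlie hx hy] at hsum
  have h := h2 hsum
  rw [add_mul, mul_comm_eq_neg_of_mem hsq (hDX y hy) hy] at h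
  linear_combination (norm := abel) -h

theorem map_two_nsmul_mul_right (h2 : IsSMulRegular R (2 : ℕ)) (hsq : ∀ x ∈ X, x * x = 0)
    (hDX : ∀ x ∈ X, D x ∈ X)
    (hlie : IsLieDerivOn D X)
    (hx : x ∈ X) (hy : y ∈ X) : D (2 • x) * y = 2 • (D x * y) := by
  have hxy := X.add_mem hx hy
  have h2xy := map_add_mul_right h2 hsq hDX hlie (X.nsmul_mem hx 2) hy
  have hleft := map_add_mul_right h2 hsq hDX hlie hx hxy
  have hright := map_add_mul_right h2 hsq hDX hlie hxy hx
  have hsplit := map_add_mul_right h2 hsq hDX hlie hx hy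
  rw [add_comm (x + y) x, ← add_assoc, ← two_nsmul] at hright
  rw [← add_assoc, ← two_nsmul, mul_add, mul_add, mul_add, hright, hsplit] at hleft
  rw [two_nsmul (D x * y)]
  linear_combination (norm := abel) hleft - h2xy

theorem map_mul_of_isLieDerivOn (h2 : IsSMulRegular R (2 : ℕ)) (hsq : ∀ x ∈ X, x * x = 0)
    (hXY : ∀ x ∈ X, ∀ y ∈ X, x * y ∈ Y) (hDX : ∀ x ∈ X, D x ∈ X)
    (hlie : IsLieDerivOn D X)
    {ψ : R →+ R} (hψ : ∀ v ∈ Y, D (2 • v) = 2 • D v + ψ v) {a b : R} (ha : a ∈ X)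
    (hb : b ∈ X) : D (a * b) = D a * b + a * D b := by
  have hab := map_two_nsmul_mul hsq hDX hlie ha hb
  have hψab : ψ (a * b) = 0 := by
    have h4 := hψ _ (Y.nsmul_mem (hXY a ha b hb) 2)
    rw [hab, map_nsmul, ← smul_mul_assoc, map_two_nsmul_mul hsq hDX hlie (X.nsmul_mem ha 2) hb,
      map_two_nsmul_mul_right h2 hsq hDX hlie ha hb, smul_mul_assoc, ← smul_add,
      left_eq_add] at h4
    exact h2.right_eq_zero_of_smul h4
  rw [hψ _ (hXY a ha b hb), hψab, add_zero] at hab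
  exact h2 hab

end SquareZero

theorem IsMultLieNDeriv.map_mul_of_mem {m : ℕ} {D : R → R} {e : R} {s : ℤ}
    {X Y : AddSubgroup R} (hD : IsMultLieNDeriv (m + 2) D) (hDe : D e ∈ rctr R)
    (h2 : IsSMulRegular R (2 : ℕ)) (hsq : ∀ x ∈ X, x * x = 0) (hXY : ∀ x ∈ X, ∀ y ∈ X, x * y ∈ Y)
    (hs : IsUnit s) (hY : ∀ v ∈ Y, bracketRight e v = s • v) (hDX : ∀ x ∈ X, D x ∈ X)
    (hDY : ∀ v ∈ Y, D v ∈ Y) {a b : R} (ha : a ∈ X) (hb : b ∈ X) :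
    D (a * b) = D a * b + a * D b := by
  have hcomm : ∀ p ∈ X, ∀ q ∈ X, p * q - q * p ∈ Y := fun p hp q hq =>
    Y.sub_mem (hXY p hp q hq) (hXY q hq p hp)
  obtain ⟨ψ, hψ⟩ := hD.exists_addMonoidHom_map_two_nsmul hDe hs hY hDY
  refine map_mul_of_isLieDerivOn h2 hsq hXY hDX (fun p hp q hq => ?_) hψ ha hb
  exact hD.map_commutator_of_mem hDe hs hY hDY (hcomm p hp q hq) (hcomm _ (hDX p hp) q hq)
    (hcomm p hp _ (hDX q hq))

end

theorem stmt17_general {R : Type*} [NonAssocRing R] (halt : IsAlt R)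
    (e₁ : R)
    (n : ℕ) (hn : 2 ≤ n)
    (htor : ∀ k ∈ ({2, 3, n - 1, n - 3} : Set ℕ), 1 ≤ k → ∀ x : R, k • x = 0 → x = 0)
    (D : R → R) (hD : IsMultLieNDeriv n D)
    (hcc : (∀ a ∈ P12 e₁, D a ∈ P12 e₁) ∧ (∀ a ∈ P21 e₁, D a ∈ P21 e₁))
    (hDe₁ : D e₁ ∈ rctr R)
    :
    (∀ a ∈ P12 e₁, ∀ b ∈ P12 e₁, D (a * b) = D a * b + a * D b) ∧
    (∀ a ∈ P21 e₁, ∀ b ∈ P21 e₁, D (a * b) = D a * b + a * D b) := by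
  obtain ⟨m, rfl⟩ : ∃ m, n = m + 2 := ⟨n - 2, by omega⟩
  have h2 : IsSMulRegular R (2 : ℕ) :=
    .of_right_eq_zero_of_smul (htor 2 (by simp) (by norm_num))
  constructor
  · intro a ha b hb
    exact hD.map_mul_of_mem (X := peirce12 e₁) (Y := peirce21 e₁) hDe₁ h2
      (fun x hx => halt.mul_self_eq_zero_of_mem_P12 hx) (fun x hx y hy => halt.mul_mem_P21 hx hy)
      isUnit_one (fun v hv => by rw [one_smul, bracketRight_of_mem_P21 hv]) hcc.1 hcc.2 ha hb
  · intro a ha b hb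
    exact hD.map_mul_of_mem (X := peirce21 e₁) (Y := peirce12 e₁) hDe₁ h2
      (fun x hx => halt.mul_self_eq_zero_of_mem_P21 hx) (fun x hx y hy => halt.mul_mem_P12 hx hy)
      isUnit_one.neg (fun v hv => by rw [neg_one_zsmul, bracketRight_of_mem_P12 hv]) hcc.2 hcc.1
      ha hb

theorem stmt17 {R : Type*} [NonAssocRing R] (halt : IsAlt R)
    (e₁ e₂ : R) (he₂ : e₂ = 1 - e₁)
    (he : e₁ * e₁ = e₁) (hne0 : e₁ ≠ 0) (hne1 : e₁ ≠ 1)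
    (n : ℕ) (hn : 2 ≤ n)
    (htor : ∀ k ∈ ({2, 3, n - 1, n - 3} : Set ℕ), 1 ≤ k → ∀ x : R, k • x = 0 → x = 0)
    (hc1 : (∀ x ∈ P12 e₁, (∀ y ∈ P21 e₁, x * y = 0) → x = 0) ∧
           (∀ x ∈ P21 e₁, (∀ y ∈ P12 e₁, x * y = 0) → x = 0))
    (hc2 : (∀ x ∈ P11 e₁, (∀ y ∈ P12 e₁, x * y = 0) → x = 0) ∧
           (∀ x ∈ P11 e₁, (∀ y ∈ P21 e₁, y * x = 0) → x = 0))
    (hc3 : (∀ x ∈ P22 e₁, (∀ y ∈ P12 e₁, y * x = 0) → x = 0) ∧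
           (∀ x ∈ P22 e₁, (∀ y ∈ P21 e₁, x * y = 0) → x = 0))
    (hc4 : ∀ z ∈ rctr R, z ≠ 0 → ∀ r : R, ∃ s : R, z * s = r)
    (D : R → R) (hD : IsMultLieNDeriv n D)
    (ha : ∀ a ∈ P11 e₁, ∃ z ∈ rctr R, (e₂ * D a) * e₂ = z * e₂)
    (hb : ∀ a ∈ P22 e₁, ∃ z ∈ rctr R, (e₁ * D a) * e₁ = z * e₁)
    (hcc : (∀ a ∈ P12 e₁, D a ∈ P12 e₁) ∧ (∀ a ∈ P21 e₁, D a ∈ P21 e₁))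
    (hDe₁ : D e₁ ∈ rctr R)
    :
    (∀ a ∈ P12 e₁, ∀ b ∈ P12 e₁, D (a * b) = D a * b + a * D b) ∧
    (∀ a ∈ P21 e₁, ∀ b ∈ P21 e₁, D (a * b) = D a * b + a * D b) :=
  stmt17_general halt e₁ n hn htor D hD hcc hDe₁
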